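/- The partial derivative of the relevance functional with respect to a single kernel entry: fix a matrix q : 𝒳 × 𝒳̂ → ℝ with all entries positive and a coordinate (x₀, x̂₀). Then the real function t ↦ G(q[(x₀,x̂₀) ↦ t]), obtained from G by replacing the entry q(x₀,x̂₀) with t, has derivative at the point t = q(x₀,x̂₀) equal to pX(x₀) · Σ_y pYX(y|x₀) · log( pq(x̂₀|y) / pq(x̂₀) ). -/

import Mathlib

/-!
Only the column `x̂₀` of `q` depends on `t`, and in it both `pq(x̂₀|y)` and `pq(x̂₀)` are affine
in `t`, with slopes `p(x₀|y)` and `pX(x₀)`. Differentiating `a · log (a / b)` gives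
`a' · log (a / b) + a' - a · b' / b`. After weighting by `pY(y)` and summing over `y`, the last two
terms cancel: `Σ_y pY(y) p(x₀|y) = pX(x₀) = b'` and `Σ_y pY(y) pq(x̂₀|y) = pq(x̂₀) = b`.
-/

open Finset Real Function

theorem HasDerivAt.mul_log_div {f g : ℝ → ℝ} {f' g' t : ℝ} (hf : HasDerivAt f f' t)
    (hg : HasDerivAt g g' t) (hft : f t ≠ 0) (hgt : g t ≠ 0) :
    HasDerivAt (fun s => f s * Real.log (f s / g s))
      (f' * Real.log (f t / g t) + f' - f t * g' / g t) t := by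
  refine (hf.fun_mul ((hf.fun_div hg hgt).log (div_ne_zero hft hgt))).congr_deriv ?_
  field_simp
  ring

theorem hasDerivAt_sum_update_mul {ι : Type*} [Fintype ι] [DecidableEq ι]
    (v w : ι → ℝ) (i : ι) (t : ℝ) :
    HasDerivAt (fun s => ∑ j, update v i s j * w j) (w i) t := by
  simpa [Pi.single_apply] using HasDerivAt.fun_sum fun j (_ : j ∈ univ) =>
    (hasDerivAt_pi.1 (hasDerivAt_update v i t) j).mul_const (w j)

theorem hasDerivAt_sum_mul_update {ι : Type*} [Fintype ι] [DecidableEq ι]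
    (v w : ι → ℝ) (i : ι) (t : ℝ) :
    HasDerivAt (fun s => ∑ j, w j * update v i s j) (w i) t := by
  simpa only [mul_comm (w _)] using hasDerivAt_sum_update_mul v w i t

theorem hasDerivAt_sum_columns_update {𝒳 𝒳h : Type*} [Fintype 𝒳h] [DecidableEq 𝒳]
    [DecidableEq 𝒳h] {F : (𝒳 → ℝ) → ℝ} {F' s : ℝ} (q : 𝒳 × 𝒳h → ℝ) (x₀ : 𝒳) (xh₀ : 𝒳h)
    (h : HasDerivAt (fun t => F (update (fun x => q (x, xh₀)) x₀ t)) F' s) :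
    HasDerivAt (fun t => ∑ xh, F (fun x => update q (x₀, xh₀) t (x, xh))) F' s := by
  have hsplit : (fun t => ∑ xh, F (fun x => update q (x₀, xh₀) t (x, xh))) =
      fun t => F (update (fun x => q (x, xh₀)) x₀ t) + ∑ xh ∈ {xh₀}ᶜ, F (fun x => q (x, xh)) := by
    funext t
    rw [Fintype.sum_eq_add_sum_compl xh₀,
      update_comp_eq_of_injective' q (f := fun x => (x, xh₀)) (Prod.mk_left_injective xh₀)]
    congr 1
    refine sum_congr rfl fun xh hxh => congrArg F (funext fun x => update_of_ne ?_ _ _)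
    exact ne_of_apply_ne Prod.snd (by simpa using hxh)
  rw [hsplit]
  exact h.add_const _

namespace RelevanceFunctional

variable {𝒳 𝒴 : Type*} [Fintype 𝒳]

noncomputable def outputMarginal (pX : 𝒳 → ℝ) (pYX : 𝒳 → 𝒴 → ℝ) (y : 𝒴) : ℝ :=
  ∑ x, pX x * pYX x y

noncomputable def posterior (pX : 𝒳 → ℝ) (pYX : 𝒳 → 𝒴 → ℝ) (y : 𝒴) (x : 𝒳) : ℝ :=
  pX x * pYX x y / outputMarginal pX pYX y

/-- `pq(x̂)` for the column `c = q(·, x̂)`. -/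
noncomputable def codeMarginal (pX : 𝒳 → ℝ) (c : 𝒳 → ℝ) : ℝ :=
  ∑ x, pX x * c x

/-- `pq(x̂|y)` for the column `c = q(·, x̂)`. -/
noncomputable def codeGivenOutput (pX : 𝒳 → ℝ) (pYX : 𝒳 → 𝒴 → ℝ) (c : 𝒳 → ℝ) (y : 𝒴) : ℝ :=
  ∑ x, c x * posterior pX pYX y x

/-- The contribution of the column `c = q(·, x̂)` to `G(q)`. -/
noncomputable def columnRelevance [Fintype 𝒴] (pX : 𝒳 → ℝ) (pYX : 𝒳 → 𝒴 → ℝ) (c : 𝒳 → ℝ) : ℝ :=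
  ∑ y, outputMarginal pX pYX y * codeGivenOutput pX pYX c y *
    log (codeGivenOutput pX pYX c y / codeMarginal pX c)

variable {pX : 𝒳 → ℝ} {pYX : 𝒳 → 𝒴 → ℝ} {c : 𝒳 → ℝ}

theorem outputMarginal_pos [Nonempty 𝒳] (hpX : ∀ x, 0 < pX x) (hpYX : ∀ x y, 0 < pYX x y)
    (y : 𝒴) : 0 < outputMarginal pX pYX y :=
  sum_pos (fun x _ => mul_pos (hpX x) (hpYX x y)) univ_nonempty

theorem codeMarginal_pos [Nonempty 𝒳] (hpX : ∀ x, 0 < pX x) (hc : ∀ x, 0 < c x) :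
    0 < codeMarginal pX c :=
  sum_pos (fun x _ => mul_pos (hpX x) (hc x)) univ_nonempty

theorem codeGivenOutput_pos [Nonempty 𝒳] (hpX : ∀ x, 0 < pX x) (hpYX : ∀ x y, 0 < pYX x y)
    (hc : ∀ x, 0 < c x) (y : 𝒴) : 0 < codeGivenOutput pX pYX c y :=
  sum_pos (fun x _ => mul_pos (hc x)
    (div_pos (mul_pos (hpX x) (hpYX x y)) (outputMarginal_pos hpX hpYX y))) univ_nonempty

theorem outputMarginal_mul_posterior {y : 𝒴} (hy : outputMarginal pX pYX y ≠ 0) (x : 𝒳) :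
    outputMarginal pX pYX y * posterior pX pYX y x = pX x * pYX x y :=
  mul_div_cancel₀ _ hy

theorem sum_outputMarginal_mul_codeGivenOutput [Fintype 𝒴]
    (hpY : ∀ y, outputMarginal pX pYX y ≠ 0) (hpYX : ∀ x, ∑ y, pYX x y = 1) :
    ∑ y, outputMarginal pX pYX y * codeGivenOutput pX pYX c y = codeMarginal pX c := by
  calc ∑ y, outputMarginal pX pYX y * codeGivenOutput pX pYX c y
      = ∑ y, ∑ x, c x * (pX x * pYX x y) := by
        simp_rw [codeGivenOutput, mul_sum, mul_left_comm (outputMarginal pX pYX _),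
          outputMarginal_mul_posterior (hpY _)]
    _ = ∑ x, pX x * c x * ∑ y, pYX x y := by
        rw [sum_comm]
        simp_rw [mul_sum]
        exact sum_congr rfl fun x _ => sum_congr rfl fun y _ => by ring
    _ = codeMarginal pX c := by simp [hpYX, codeMarginal]

theorem hasDerivAt_columnRelevance_update [Fintype 𝒴] [DecidableEq 𝒳] (hpX : ∀ x, 0 < pX x)
    (hpYX : ∀ x y, 0 < pYX x y) (hsum : ∀ x, ∑ y, pYX x y = 1) (hc : ∀ x, 0 < c x) (x₀ : 𝒳) :
    HasDerivAt (fun t => columnRelevance pX pYX (update c x₀ t))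
      (pX x₀ * ∑ y, pYX x₀ y * log (codeGivenOutput pX pYX c y / codeMarginal pX c))
      (c x₀) := by
  have : Nonempty 𝒳 := ⟨x₀⟩
  set pY := outputMarginal pX pYX
  set A := codeGivenOutput pX pYX c
  set B := codeMarginal pX c
  have hpY y : pY y ≠ 0 := (outputMarginal_pos hpX hpYX y).ne'
  have hB : B ≠ 0 := (codeMarginal_pos hpX hc).ne'
  have hterm y : HasDerivAt
      (fun t => pY y * codeGivenOutput pX pYX (update c x₀ t) y *
        log (codeGivenOutput pX pYX (update c x₀ t) y / codeMarginal pX (update c x₀ t)))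
      (pY y * (posterior pX pYX y x₀ * log (A y / B) + posterior pX pYX y x₀
        - A y * pX x₀ / B)) (c x₀) := by
    have h := HasDerivAt.mul_log_div (hasDerivAt_sum_update_mul c (posterior pX pYX y) x₀ (c x₀))
      (hasDerivAt_sum_mul_update c pX x₀ (c x₀))
    rw [update_eq_self] at h
    have h' := (h (codeGivenOutput_pos hpX hpYX hc y).ne' hB).const_mul (pY y)
    simp only [← mul_assoc] at h'
    exact h'
  refine (HasDerivAt.fun_sum fun y (_ : y ∈ univ) => hterm y).congr_deriv ?_
  have hpost y : pY y * posterior pX pYX y x₀ = pX x₀ * pYX x₀ y :=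
    outputMarginal_mul_posterior (hpY y) x₀
  have hmarg : ∑ y, pY y * A y = B := sum_outputMarginal_mul_codeGivenOutput hpY hsum
  calc ∑ y, pY y * (posterior pX pYX y x₀ * log (A y / B) + posterior pX pYX y x₀
        - A y * pX x₀ / B)
      = ∑ y, (pX x₀ * (pYX x₀ y * log (A y / B)) + pX x₀ * pYX x₀ y
        - pY y * A y * (pX x₀ / B)) := sum_congr rfl fun y _ => by
        rw [mul_sub, mul_add, ← mul_assoc, hpost]
        ring
    _ = pX x₀ * ∑ y, pYX x₀ y * log (A y / B) + pX x₀ * ∑ y, pYX x₀ y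
        - (∑ y, pY y * A y) * (pX x₀ / B) := by
        rw [sum_sub_distrib, sum_add_distrib, mul_sum, mul_sum, sum_mul]
    _ = pX x₀ * ∑ y, pYX x₀ y * log (A y / B) := by
        rw [hsum, hmarg, mul_div_cancel₀ _ hB]
        ring

end RelevanceFunctional

theorem relevance_functional_partial_derivative_general
    {𝒳 𝒳h 𝒴 : Type*} [Fintype 𝒳] [Fintype 𝒳h] [Fintype 𝒴]
    [DecidableEq 𝒳] [DecidableEq 𝒳h]
    (pX : 𝒳 → ℝ) (hpXpos : ∀ x, 0 < pX x)
    (pYX : 𝒳 → 𝒴 → ℝ) (hpYXpos : ∀ x y, 0 < pYX x y)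
    (hpYXsum : ∀ x, ∑ y, pYX x y = 1)
    (q : 𝒳 × 𝒳h → ℝ) (hqpos : ∀ x xh, 0 < q (x, xh))
    (x₀ : 𝒳) (xh₀ : 𝒳h) :
    HasDerivAt
      (fun t : ℝ =>
        ∑ xh, ∑ y, (∑ x, pX x * pYX x y) *
          (∑ x, Function.update q (x₀, xh₀) t (x, xh) *
            (pX x * pYX x y / ∑ x', pX x' * pYX x' y)) *
          Real.log
            ((∑ x, Function.update q (x₀, xh₀) t (x, xh) *
              (pX x * pYX x y / ∑ x', pX x' * pYX x' y)) /
             ∑ x, pX x * Function.update q (x₀, xh₀) t (x, xh)))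
      (pX x₀ * ∑ y, pYX x₀ y *
        Real.log
          ((∑ x, q (x, xh₀) * (pX x * pYX x y / ∑ x', pX x' * pYX x' y)) /
           ∑ x, pX x * q (x, xh₀)))
      (q (x₀, xh₀)) :=
  hasDerivAt_sum_columns_update (F := RelevanceFunctional.columnRelevance pX pYX) q x₀ xh₀
    (RelevanceFunctional.hasDerivAt_columnRelevance_update hpXpos hpYXpos hpYXsum
      (fun x => hqpos x xh₀) x₀)

/-- Partial derivative of the relevance functional
`G(q) = Σ_{x̂,y} pY(y)·pq(x̂|y)·log(pq(x̂|y)/pq(x̂))`, where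
`pq(x̂) = Σ_x pX(x)·q(x,x̂)`, `pq(x̂|y) = Σ_x q(x,x̂)·p(x|y)`,
`pY(y) = Σ_x pX(x)·pYX(y|x)` and `p(x|y) = pX(x)·pYX(y|x)/pY(y)`,
with respect to the single kernel entry `q(x₀,x̂₀)`:
the function `t ↦ G(q[(x₀,x̂₀) ↦ t])` has derivative
`pX(x₀)·Σ_y pYX(y|x₀)·log(pq(x̂₀|y)/pq(x̂₀))` at the point `t = q(x₀,x̂₀)`. -/
theorem relevance_functional_partial_derivative
    {𝒳 𝒳h 𝒴 : Type*} [Fintype 𝒳] [Fintype 𝒳h] [Fintype 𝒴]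
    [Nonempty 𝒳] [Nonempty 𝒳h] [Nonempty 𝒴]
    [DecidableEq 𝒳] [DecidableEq 𝒳h]
    (pX : 𝒳 → ℝ) (hpXpos : ∀ x, 0 < pX x) (hpXsum : ∑ x, pX x = 1)
    (pYX : 𝒳 → 𝒴 → ℝ) (hpYXpos : ∀ x y, 0 < pYX x y)
    (hpYXsum : ∀ x, ∑ y, pYX x y = 1)
    (q : 𝒳 × 𝒳h → ℝ) (hqpos : ∀ x xh, 0 < q (x, xh))
    (x₀ : 𝒳) (xh₀ : 𝒳h) :
    HasDerivAt
      (fun t : ℝ =>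
        ∑ xh, ∑ y, (∑ x, pX x * pYX x y) *
          (∑ x, Function.update q (x₀, xh₀) t (x, xh) *
            (pX x * pYX x y / ∑ x', pX x' * pYX x' y)) *
          Real.log
            ((∑ x, Function.update q (x₀, xh₀) t (x, xh) *
              (pX x * pYX x y / ∑ x', pX x' * pYX x' y)) /
             ∑ x, pX x * Function.update q (x₀, xh₀) t (x, xh)))
      (pX x₀ * ∑ y, pYX x₀ y *
        Real.log
          ((∑ x, q (x, xh₀) * (pX x * pYX x y / ∑ x', pX x' * pYX x' y)) /
           ∑ x, pX x * q (x, xh₀)))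
      (q (x₀, xh₀)) :=
  relevance_functional_partial_derivative_general pX hpXpos pYX hpYXpos hpYXsum q hqpos x₀ xh₀
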